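/- Let P, D ∈ ℍ[t] with P ≠ 0 satisfy the Study condition P·D̄ + D·P̄ = 0, let α ∈ ℝ[t] be nonzero and let b ∈ ℍ[t]. If the trajectory of the origin under C = P + εD equals −2b/α, in the sense that α·(D·P̄) = (P·P̄)·b as quaternion polynomials, then b·P = α·D; hence (α + εb)·P = α·(P + εD), i.e. the motion polynomial C agrees, up to the real polynomial factor α, with a motion polynomial of the form (α + εb)·A with A = P. -/

import Mathlib

/-!
Since `P·P̄` is fixed by conjugation, its coefficients are real, so it is central in `ℍ[t]`.
Hence the trajectory equation reads `α·D·P̄ = b·P·P̄`, and `P̄ ≠ 0` can be cancelled on the right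
because `ℍ[t]` has no zero divisors. The dual quaternion identity is then just its `ε`-part.
-/

open Polynomial

noncomputable section

set_option synthInstance.maxHeartbeats 1000000

/-- Embedding of real polynomials into quaternion polynomials (scalar coefficients). -/
def toQ : Polynomial ℝ →+* Polynomial (Quaternion ℝ) :=
  mapRingHom (algebraMap ℝ (Quaternion ℝ))

/-- Coefficientwise quaternion conjugation of a quaternion polynomial. -/
def pconj (p : Polynomial (Quaternion ℝ)) : Polynomial (Quaternion ℝ) :=
  p.sum fun n a => monomial n (star a)

theorem Polynomial.commute_of_forall_coeff_commute {R : Type*} [Semiring R] {p q : R[X]}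
    (h : ∀ i j, Commute (p.coeff i) (q.coeff j)) : Commute p q := by
  ext n : 1
  rw [coeff_mul, coeff_mul, ← Finset.Nat.sum_antidiagonal_swap]
  exact Finset.sum_congr rfl fun x _ => (h x.2 x.1).eq

theorem DualNumber.inl_add_eps_mul_inl_mul_inl_eq_inl_mul_iff {R : Type*} [Semiring R]
    (a b p d : R) :
    (TrivSqZeroExt.inl a + DualNumber.eps * TrivSqZeroExt.inl b) * TrivSqZeroExt.inl p
      = (TrivSqZeroExt.inl a * (TrivSqZeroExt.inl p + DualNumber.eps * TrivSqZeroExt.inl d) :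
        DualNumber R) ↔ b * p = a * d := by
  rw [TrivSqZeroExt.ext_iff]
  simp

theorem pconj_coeff (p : Polynomial (Quaternion ℝ)) (n : ℕ) :
    (pconj p).coeff n = star (p.coeff n) := by
  rw [pconj, Polynomial.sum, finsetSum_coeff, Finset.sum_eq_single n]
  · exact coeff_monomial_same n _
  · exact fun m _ hmn => coeff_monomial_of_ne _ hmn.symm
  · intro hn
    rw [notMem_support_iff.mp hn, star_zero, monomial_zero_right, coeff_zero]

theorem pconj_pconj (p : Polynomial (Quaternion ℝ)) : pconj (pconj p) = p :=
  ext fun n => by rw [pconj_coeff, pconj_coeff, star_star]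

theorem pconj_eq_zero_iff {p : Polynomial (Quaternion ℝ)} : pconj p = 0 ↔ p = 0 := by
  simp only [Polynomial.ext_iff, pconj_coeff, coeff_zero, star_eq_zero]

theorem pconj_mul (p q : Polynomial (Quaternion ℝ)) : pconj (p * q) = pconj q * pconj p := by
  ext n : 1
  rw [pconj_coeff, coeff_mul, coeff_mul, star_sum, ← Finset.Nat.sum_antidiagonal_swap]
  simp only [Prod.fst_swap, Prod.snd_swap, star_mul, pconj_coeff]

theorem commute_of_pconj_eq_self {p : Polynomial (Quaternion ℝ)} (hp : pconj p = p)
    (q : Polynomial (Quaternion ℝ)) : Commute p q := by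
  refine commute_of_forall_coeff_commute fun i j => ?_
  have hreal : star (p.coeff i) = p.coeff i := by rw [← pconj_coeff, hp]
  rw [Quaternion.star_eq_self.mp hreal]
  exact Quaternion.coe_commute _ _

theorem commute_mul_pconj_self (p q : Polynomial (Quaternion ℝ)) : Commute (p * pconj p) q :=
  commute_of_pconj_eq_self (by rw [pconj_mul, pconj_pconj]) q

open TrivSqZeroExt DualNumber in
theorem motion_polynomial_factorization_general (P D : Polynomial (Quaternion ℝ)) (hP : P ≠ 0)
    (α : Polynomial ℝ) (b : Polynomial (Quaternion ℝ))
    (htraj : toQ α * (D * pconj P) = (P * pconj P) * b) :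
    b * P = toQ α * D ∧
    (inl (toQ α) + eps * inl b) * (inl P : DualNumber (Polynomial (Quaternion ℝ)))
      = inl (toQ α) * (inl P + eps * inl D) := by
  have hbP : b * P = toQ α * D := by
    refine mul_right_cancel₀ (mt pconj_eq_zero_iff.mp hP) ?_
    calc b * P * pconj P = P * pconj P * b := by
          rw [mul_assoc, (commute_mul_pconj_self P b).eq]
      _ = toQ α * D * pconj P := by rw [← htraj, mul_assoc]
  exact ⟨hbP, (inl_add_eps_mul_inl_mul_inl_eq_inl_mul_iff _ _ _ _).mpr hbP⟩

open TrivSqZeroExt DualNumber in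
/-- If `P ≠ 0` and `D` satisfy the Study condition, `α ≠ 0` is real and
the trajectory of the origin under `C = P + εD` equals `−2b/α` in the sense
`α·(D·P̄) = (P·P̄)·b`, then `b·P = α·D`; hence `(α + εb)·P = α·(P + εD)` as dual quaternion
polynomials, i.e. `C` agrees up to the real polynomial factor `α` with `(α + εb)·A`, `A = P`. -/
theorem motion_polynomial_factorization (P D : Polynomial (Quaternion ℝ)) (hP : P ≠ 0)
    (hStudy : P * pconj D + D * pconj P = 0)
    (α : Polynomial ℝ) (hα : α ≠ 0) (b : Polynomial (Quaternion ℝ))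
    (htraj : toQ α * (D * pconj P) = (P * pconj P) * b) :
    b * P = toQ α * D ∧
    (inl (toQ α) + eps * inl b) * (inl P : DualNumber (Polynomial (Quaternion ℝ)))
      = inl (toQ α) * (inl P + eps * inl D) :=
  motion_polynomial_factorization_general P D hP α b htraj
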